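/- arXiv:1607.05050 — 2 statements merged into one kernel-verified Lean document; each statement's English description precedes it below -/
import Mathlib

section
/- Fix an integer N ≥ 2 and a real number q with 0 < q < 1. Let m, n be integers with |m| > 1 and |n| > 1, and let λ, λ′ be nonzero integers with λ + λ′ = 1. Set s = q^{−Nλ/m} and t = q^{−Nλ′/n}. Then s^m t^n = q^{−N}, and for every x ∈ ℂ \ {0} at which all theta factors occurring are nonzero, Y_{m,n}(x;s,t) = 1. -/
/-- Infinite `q`-Pochhammer symbol `(z;p)_∞ = ∏_{j≥0} (1 − z pʲ)`. -/
noncomputable def qPoch (z p : ℂ) : ℂ := ∏' j : ℕ, (1 - z * p ^ j)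

/-- Jacobi Θ function `Θ_p(z) = (z;p)_∞ (p z⁻¹;p)_∞ (p;p)_∞`. -/
noncomputable def ThetaF (p z : ℂ) : ℂ := qPoch z p * qPoch (p * z⁻¹) p * qPoch p p

/-- The function
`U(z) = q^{2/N−2} · Θ_{q^{2N}}(q²z²) Θ_{q^{2N}}(q²z⁻²) / (Θ_{q^{2N}}(z²) Θ_{q^{2N}}(z⁻²))`. -/
noncomputable def Ufun (N : ℕ) (q : ℝ) (z : ℂ) : ℂ :=
  ((q ^ ((2 : ℝ) / N - 2) : ℝ) : ℂ) *
    (ThetaF ((q : ℂ) ^ (2 * N)) ((q : ℂ) ^ 2 * z ^ 2) *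
      ThetaF ((q : ℂ) ^ (2 * N)) ((q : ℂ) ^ 2 * z⁻¹ ^ 2)) /
    (ThetaF ((q : ℂ) ^ (2 * N)) (z ^ 2) * ThetaF ((q : ℂ) ^ (2 * N)) (z⁻¹ ^ 2))

/-- All four theta factors occurring in `U(z)` are nonzero. -/
def thetaReg (N : ℕ) (q : ℝ) (z : ℂ) : Prop :=
  ThetaF ((q : ℂ) ^ (2 * N)) ((q : ℂ) ^ 2 * z ^ 2) ≠ 0 ∧
  ThetaF ((q : ℂ) ^ (2 * N)) ((q : ℂ) ^ 2 * z⁻¹ ^ 2) ≠ 0 ∧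
  ThetaF ((q : ℂ) ^ (2 * N)) (z ^ 2) ≠ 0 ∧
  ThetaF ((q : ℂ) ^ (2 * N)) (z⁻¹ ^ 2) ≠ 0

/-- `F_a(x;s) = ∏_{k=0}^{a−1} U(sᵏx)` for `a > 0`, `F₀ = 1`, and
`F_a(x;s) = ∏_{k=1}^{−a} U(s⁻ᵏx)⁻¹` for `a < 0`. -/
noncomputable def Ffun (N : ℕ) (q : ℝ) (s x : ℂ) (a : ℤ) : ℂ :=
  if 0 < a then ∏ k ∈ Finset.range a.toNat, Ufun N q (s ^ (k : ℕ) * x)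
  else ∏ k ∈ Finset.range (-a).toNat, (Ufun N q (s ^ (-(k : ℤ) - 1) * x))⁻¹

/-- The structure function
`Y_{m,n}(x;s,t) = F_n(x;t) F_{−n}(x;t) / (F_m(x;s) F_{−m}(x;s))`. -/
noncomputable def Yfun (N : ℕ) (q : ℝ) (s t x : ℂ) (m n : ℤ) : ℂ :=
  Ffun N q t x n * Ffun N q t x (-n) / (Ffun N q s x m * Ffun N q s x (-m))

/-!
Quasi-periodicity `Θ_p(pz) = -z⁻¹ Θ_p(z)` makes `U` invariant under `z ↦ q^N z`: with
`p = q^{2N}`, the argument `z²` becomes `p z²` and `z⁻²` becomes `p⁻¹ z⁻²`, so numerator and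
denominator of `U` pick up the same factor `p⁻¹ z⁻⁴`. Reindexing gives
`F_{-a}(x;s) = F_a(s^{-a}x;s)⁻¹`, and `s^{-m} = q^{Nλ}` is a period of `U`, so
`F_m(x;s) F_{-m}(x;s) = 1`; likewise for `t` and `n`, whence `Y_{m,n} = 1`.
The surface condition is `s^m t^n = q^{-N(λ+λ')}`.
-/

section Theta

variable {p : ℂ}

lemma multipliable_one_sub_mul_pow (w : ℂ) (hp : ‖p‖ < 1) :
    Multipliable fun j : ℕ => 1 - w * p ^ j := by
  have hsum : Summable fun j : ℕ => -(w * p ^ j) :=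
    ((summable_geometric_of_norm_lt_one hp).mul_left w).neg
  simpa only [sub_eq_add_neg] using Complex.multipliable_one_add_of_summable hsum

lemma qPoch_eq_one_sub_mul_qPoch (w : ℂ) (hp : ‖p‖ < 1) :
    qPoch w p = (1 - w) * qPoch (p * w) p := by
  have hshift : (fun j : ℕ => 1 - w * p ^ (j + 1)) = fun j : ℕ => 1 - p * w * p ^ j := by
    funext j; ring
  have hmult : Multipliable fun j : ℕ => 1 - w * p ^ (j + 1) := by
    rw [hshift]; exact multipliable_one_sub_mul_pow (p * w) hp
  have h := tprod_eq_zero_mul' (f := fun j : ℕ => 1 - w * p ^ j) hmult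
  rw [pow_zero, mul_one, hshift] at h
  rw [qPoch, qPoch, h]

lemma ThetaF_mul (hp : ‖p‖ < 1) (hp0 : p ≠ 0) {z : ℂ} (hz : z ≠ 0) :
    ThetaF p (p * z) = -z⁻¹ * ThetaF p z := by
  have hinv : p * (p * z)⁻¹ = z⁻¹ := by field_simp
  have hfactor : (1 : ℂ) - z⁻¹ = -z⁻¹ * (1 - z) := by field_simp; ring
  rw [ThetaF, ThetaF, hinv, qPoch_eq_one_sub_mul_qPoch z hp,
    qPoch_eq_one_sub_mul_qPoch z⁻¹ hp, hfactor]
  ring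

lemma ThetaF_inv_mul (hp : ‖p‖ < 1) (hp0 : p ≠ 0) {z : ℂ} (hz : z ≠ 0) :
    ThetaF p (p⁻¹ * z) = -(p⁻¹ * z) * ThetaF p z := by
  have h := ThetaF_mul hp hp0 (mul_ne_zero (inv_ne_zero hp0) hz)
  rw [mul_inv_cancel_left₀ hp0] at h
  rw [h]
  field_simp

end Theta

section U

variable {N : ℕ} {q : ℝ}

lemma Ufun_pow_mul (hN : 1 ≤ N) (hq0 : q ≠ 0) (hq1 : |q| < 1) {z : ℂ} (hz : z ≠ 0) :
    Ufun N q ((q : ℂ) ^ N * z) = Ufun N q z := by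
  have hq : (q : ℂ) ≠ 0 := Complex.ofReal_ne_zero.2 hq0
  set p : ℂ := (q : ℂ) ^ (2 * N) with hp_def
  have hp0 : p ≠ 0 := pow_ne_zero _ hq
  have hp : ‖p‖ < 1 := by
    rw [norm_pow, Complex.norm_real, Real.norm_eq_abs]
    exact pow_lt_one₀ (abs_nonneg q) hq1 (by omega)
  have hsq : ((q : ℂ) ^ N * z) ^ 2 = p * z ^ 2 := by ring
  have hsq_inv : ((q : ℂ) ^ N * z)⁻¹ ^ 2 = p⁻¹ * z⁻¹ ^ 2 := by
    rw [inv_pow, hsq, mul_inv, inv_pow]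
  have hnum : ThetaF p ((q : ℂ) ^ 2 * (p * z ^ 2)) * ThetaF p ((q : ℂ) ^ 2 * (p⁻¹ * z⁻¹ ^ 2))
      = p⁻¹ * z⁻¹ ^ 4 *
        (ThetaF p ((q : ℂ) ^ 2 * z ^ 2) * ThetaF p ((q : ℂ) ^ 2 * z⁻¹ ^ 2)) := by
    rw [mul_left_comm _ p, mul_left_comm _ p⁻¹, ThetaF_mul hp hp0 (by positivity),
      ThetaF_inv_mul hp hp0 (by positivity)]
    field_simp
  have hden : ThetaF p (p * z ^ 2) * ThetaF p (p⁻¹ * z⁻¹ ^ 2)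
      = p⁻¹ * z⁻¹ ^ 4 * (ThetaF p (z ^ 2) * ThetaF p (z⁻¹ ^ 2)) := by
    rw [ThetaF_mul hp hp0 (by positivity), ThetaF_inv_mul hp hp0 (by positivity)]
    ring
  have hκ : p⁻¹ * z⁻¹ ^ 4 ≠ 0 := by positivity
  simp only [Ufun, ← hp_def, hsq, hsq_inv]
  rw [hnum, hden, mul_left_comm, mul_div_mul_left _ _ hκ]

lemma Ufun_zpow_mul (hN : 1 ≤ N) (hq0 : q ≠ 0) (hq1 : |q| < 1) {z : ℂ} (hz : z ≠ 0) (l : ℤ) :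
    Ufun N q ((q : ℂ) ^ ((N : ℤ) * l) * z) = Ufun N q z := by
  have hq : (q : ℂ) ≠ 0 := Complex.ofReal_ne_zero.2 hq0
  have hstep (k : ℤ) :
      (q : ℂ) ^ ((N : ℤ) * (k + 1)) * z = (q : ℂ) ^ N * ((q : ℂ) ^ ((N : ℤ) * k) * z) := by
    rw [mul_add_one, zpow_add₀ hq, zpow_natCast]; ring
  induction l using Int.induction_on with
  | zero => simp
  | succ k ih =>
    rw [hstep, Ufun_pow_mul hN hq0 hq1 (by positivity), ih]
  | pred k ih =>
    have hw : (q : ℂ) ^ ((N : ℤ) * (-k - 1)) * z ≠ 0 := by positivity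
    rw [← Ufun_pow_mul hN hq0 hq1 hw, ← hstep, sub_add_cancel, ih]

lemma Ufun_ne_zero (hq0 : 0 < q) {z : ℂ} (h : thetaReg N q z) : Ufun N q z ≠ 0 := by
  obtain ⟨h1, h2, h3, h4⟩ := h
  have hc : ((q ^ ((2 : ℝ) / N - 2) : ℝ) : ℂ) ≠ 0 :=
    Complex.ofReal_ne_zero.2 (Real.rpow_pos_of_pos hq0 _).ne'
  exact div_ne_zero (mul_ne_zero hc (mul_ne_zero h1 h2)) (mul_ne_zero h3 h4)

end U

section F

variable {N : ℕ} {q : ℝ} {s x : ℂ}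

lemma Ffun_natCast (a : ℕ) :
    Ffun N q s x a = ∏ k ∈ Finset.range a, Ufun N q (s ^ k * x) := by
  rcases Nat.eq_zero_or_pos a with rfl | ha
  · simp [Ffun]
  · simp [Ffun, ha]

lemma Ffun_neg_natCast_eq_inv (hs : s ≠ 0) (a : ℕ) :
    Ffun N q s x (-a) = (Ffun N q s (s ^ (-(a : ℤ)) * x) a)⁻¹ := by
  have hreindex : ∀ k ∈ Finset.range a,
      (Ufun N q (s ^ (a - 1 - k) * (s ^ (-(a : ℤ)) * x)))⁻¹
        = (Ufun N q (s ^ (-(k : ℤ) - 1) * x))⁻¹ := by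
    intro k hk
    have hka : k < a := Finset.mem_range.1 hk
    rw [← mul_assoc, ← zpow_natCast, ← zpow_add₀ hs,
      show ((a - 1 - k : ℕ) : ℤ) + -a = -k - 1 by omega]
  rw [Ffun_natCast, ← Finset.prod_inv_distrib,
    ← Finset.prod_range_reflect (fun k => (Ufun N q (s ^ k * (s ^ (-(a : ℤ)) * x)))⁻¹),
    Finset.prod_congr rfl hreindex, Ffun, if_neg (by omega), neg_neg, Int.toNat_natCast]

lemma Ffun_natCast_zpow_mul (hN : 1 ≤ N) (hq0 : q ≠ 0) (hq1 : |q| < 1) (hs : s ≠ 0)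
    (hx : x ≠ 0) (l : ℤ) (a : ℕ) :
    Ffun N q s ((q : ℂ) ^ ((N : ℤ) * l) * x) a = Ffun N q s x a := by
  simp only [Ffun_natCast]
  refine Finset.prod_congr rfl fun k _ => ?_
  rw [mul_left_comm]
  exact Ufun_zpow_mul hN hq0 hq1 (by positivity) l

lemma Ffun_mul_Ffun_neg_natCast (hN : 1 ≤ N) (hq0 : 0 < q) (hq1 : q < 1) (hs : s ≠ 0)
    (hx : x ≠ 0) (a : ℕ) (l : ℤ) (hsa : s ^ (-(a : ℤ)) = (q : ℂ) ^ ((N : ℤ) * l))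
    (hreg : ∀ k < a, thetaReg N q (s ^ k * x)) :
    Ffun N q s x a * Ffun N q s x (-a) = 1 := by
  have hq : |q| < 1 := by rwa [abs_of_pos hq0]
  rw [Ffun_neg_natCast_eq_inv hs, hsa, Ffun_natCast_zpow_mul hN hq0.ne' hq hs hx]
  refine mul_inv_cancel₀ ?_
  rw [Ffun_natCast]
  exact Finset.prod_ne_zero_iff.2 fun k hk =>
    Ufun_ne_zero hq0 (hreg k (Finset.mem_range.1 hk))

lemma Ffun_mul_Ffun_neg (hN : 1 ≤ N) (hq0 : 0 < q) (hq1 : q < 1) (hs : s ≠ 0) (hx : x ≠ 0)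
    (a l : ℤ) (hsa : s ^ a = (q : ℂ) ^ ((N : ℤ) * l))
    (hreg : ∀ k : ℤ, |k| ≤ |a| → thetaReg N q (s ^ k * x)) :
    Ffun N q s x a * Ffun N q s x (-a) = 1 := by
  have hreg' : ∀ k < a.natAbs, thetaReg N q (s ^ k * x) := fun k hk => by
    simpa only [zpow_natCast] using hreg k (by rw [Nat.abs_cast, Int.abs_eq_natAbs]; omega)
  rcases Int.natAbs_eq a with ha | ha <;> rw [ha] at hsa ⊢
  · refine Ffun_mul_Ffun_neg_natCast hN hq0 hq1 hs hx _ (-l) ?_ hreg'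
    rw [zpow_neg, hsa, ← zpow_neg, mul_neg]
  · rw [neg_neg, mul_comm]
    exact Ffun_mul_Ffun_neg_natCast hN hq0 hq1 hs hx _ l hsa hreg'

end F

lemma ofReal_rpow_div_zpow {q : ℝ} (hq0 : 0 < q) (a : ℤ) {m : ℤ} (hm : m ≠ 0) :
    ((q ^ ((a : ℝ) / m) : ℝ) : ℂ) ^ m = (q : ℂ) ^ a := by
  rw [← Complex.ofReal_zpow, ← Real.rpow_intCast, ← Real.rpow_mul hq0.le,
    div_mul_cancel₀ _ (Int.cast_ne_zero.2 hm), Real.rpow_intCast, Complex.ofReal_zpow]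

theorem Yfun_abelian_generic_general (N : ℕ) (hN : 2 ≤ N) (q : ℝ) (hq0 : 0 < q) (hq1 : q < 1)
    (m n l l' : ℤ) (hm : 1 < |m|) (hn : 1 < |n|)
    (hll' : l + l' = 1)
    (s t : ℂ)
    (hsdef : s = ((q ^ (-(N : ℝ) * l / m) : ℝ) : ℂ))
    (htdef : t = ((q ^ (-(N : ℝ) * l' / n) : ℝ) : ℂ)) :
    s ^ m * t ^ n = (q : ℂ) ^ (-(N : ℤ)) ∧
    ∀ x : ℂ, x ≠ 0 →
      (∀ k : ℤ, |k| ≤ |m| → thetaReg N q (s ^ k * x)) →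
      (∀ k : ℤ, |k| ≤ |n| → thetaReg N q (t ^ k * x)) →
      Yfun N q s t x m n = 1 := by
  have hN1 : 1 ≤ N := by omega
  have hm0 : m ≠ 0 := by rintro rfl; simp at hm
  have hn0 : n ≠ 0 := by rintro rfl; simp at hn
  have hsm : s ^ m = (q : ℂ) ^ ((N : ℤ) * -l) := by
    rw [hsdef, show -(N : ℝ) * l = ((N * -l : ℤ) : ℝ) by push_cast; ring]
    exact ofReal_rpow_div_zpow hq0 _ hm0
  have htn : t ^ n = (q : ℂ) ^ ((N : ℤ) * -l') := by
    rw [htdef, show -(N : ℝ) * l' = ((N * -l' : ℤ) : ℝ) by push_cast; ring]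
    exact ofReal_rpow_div_zpow hq0 _ hn0
  have hs : s ≠ 0 := hsdef ▸ Complex.ofReal_ne_zero.2 (Real.rpow_pos_of_pos hq0 _).ne'
  have ht : t ≠ 0 := htdef ▸ Complex.ofReal_ne_zero.2 (Real.rpow_pos_of_pos hq0 _).ne'
  refine ⟨?_, fun x hx hregs hregt => ?_⟩
  · rw [hsm, htn, ← zpow_add₀ (Complex.ofReal_ne_zero.2 hq0.ne'), ← mul_add, ← neg_add, hll',
      mul_neg_one]
  · rw [Yfun, Ffun_mul_Ffun_neg hN1 hq0 hq1 ht hx n _ htn hregt,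
      Ffun_mul_Ffun_neg hN1 hq0 hq1 hs hx m _ hsm hregs, div_one]

/-- Abelianity for `|m|,|n| > 1`: with `λ + λ' = 1` (`λ, λ'` nonzero integers),
`s = q^{−Nλ/m}` and `t = q^{−Nλ'/n}`, the surface condition `s^m t^n = q^{−N}` holds and
`Y_{m,n}(x;s,t) = 1` at every nonzero `x` where all theta factors occurring are nonzero. -/
theorem Yfun_abelian_generic (N : ℕ) (hN : 2 ≤ N) (q : ℝ) (hq0 : 0 < q) (hq1 : q < 1)
    (m n l l' : ℤ) (hm : 1 < |m|) (hn : 1 < |n|) (hl : l ≠ 0) (hl' : l' ≠ 0)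
    (hll' : l + l' = 1)
    (s t : ℂ)
    (hsdef : s = ((q ^ (-(N : ℝ) * l / m) : ℝ) : ℂ))
    (htdef : t = ((q ^ (-(N : ℝ) * l' / n) : ℝ) : ℂ)) :
    s ^ m * t ^ n = (q : ℂ) ^ (-(N : ℤ)) ∧
    ∀ x : ℂ, x ≠ 0 →
      (∀ k : ℤ, |k| ≤ |m| → thetaReg N q (s ^ k * x)) →
      (∀ k : ℤ, |k| ≤ |n| → thetaReg N q (t ^ k * x)) →
      Yfun N q s t x m n = 1 :=
  Yfun_abelian_generic_general N hN q hq0 hq1 m n l l' hm hn hll' s t hsdef htdef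
end

section
/- Let k ≥ 1 be an integer, η ∈ ℝ, c ∈ ℝ, and z ∈ ℂ with |z| < 1. For ε > 0 set p = 1 + ε, q = 1 + ηε and p* = p q^{−2c} (real power), and define E_k(z; p*, q) = exp( Σ_{ℓ=1}^∞ [(1 − (p*)^{−kℓ})(1 − ((p*)^k q²)^ℓ)/(1 + q^{2ℓ})] · z^ℓ/ℓ ). Then there is ε₀ > 0 such that the series converges absolutely for all 0 < ε < ε₀, and lim_{ε→0⁺} (E_k(z; p*, q) − 1)/ε² = −(k(1−2ηc)(k(1−2ηc)+2η)/2) · z/(1−z)². -/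
/-!
Let `p(ε)`, `q(ε)` be any deformation of `(1, 1)` with velocities `a = p'(0)`, `b = q'(0)`.
The factors `1 - p^{-kℓ}` and `1 - (p^k q^2)^ℓ` of the `ℓ`-th term vanish to first order, with
slopes `kℓa` and `-ℓ(ka + 2b)`, while `1 + q^{2ℓ} → 2`; so the `ℓ`-th term is
`-(ka(ka + 2b)/2) ℓ z^ℓ ε² + o(ε²)`. Writing `x^n = exp (n log x)` with `log p`, `log (p^k q^2)`
of size `O(ε)` bounds the `ℓ`-th term by `K ε² ℓ ρ^ℓ` with `ρ < 1`, uniformly for small `ε`, so by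
dominated convergence the exponent is `-(ka(ka + 2b)/2) z/(1-z)² ε² + o(ε²)`; as it is `O(ε²)`,
`exp S - 1 = S + O(S²)` has the same `ε²` coefficient. For `p = (1+ε)(1+ηε)^{-2c}`, `q = 1+ηε`
one has `a = 1 - 2ηc` and `b = η`.
-/

/-- The `ℓ`-th term of the series defining `g^{(k)}`:
`(1 − p^{−kℓ})(1 − (pᵏq²)^ℓ)/(1 + q^{2ℓ}) · z^ℓ/ℓ`. -/
noncomputable def Eterm (k : ℕ) (p q : ℝ) (z : ℂ) (l : ℕ) : ℂ :=
  (1 - (p : ℂ) ^ (-((k : ℤ) * l))) * (1 - ((p : ℂ) ^ k * (q : ℂ) ^ 2) ^ l)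
    / (1 + (q : ℂ) ^ (2 * l)) * z ^ l / (l : ℂ)

/-- The structure-function factor
`E_k(z;p,q) = exp( Σ_{ℓ≥1} (1 − p^{−kℓ})(1 − (pᵏq²)^ℓ)/(1 + q^{2ℓ}) · z^ℓ/ℓ )`. -/
noncomputable def Efun (k : ℕ) (p q : ℝ) (z : ℂ) : ℂ :=
  Complex.exp (∑' l : ℕ, Eterm k p q z (l + 1))

open Filter Topology Real

lemma Real.abs_exp_sub_one_le_mul_exp (t : ℝ) : |exp t - 1| ≤ |t| * exp |t| := by
  have h := Complex.norm_exp_sub_sum_le_norm_mul_exp t 1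
  simp only [Finset.range_one, Finset.sum_singleton, pow_zero, Nat.factorial_zero,
    Nat.cast_one, div_one, pow_one] at h
  exact_mod_cast h

lemma abs_one_sub_zpow_le {x T : ℝ} (hx : 0 < x) (n : ℤ) (h : |log x| ≤ T) :
    |1 - x ^ n| ≤ |n| * T * exp (|n| * T) := by
  have hnT : |n * log x| ≤ |n| * T := by
    rw [abs_mul, ← Int.cast_abs]; gcongr
  rw [abs_sub_comm, ← rpow_intCast, rpow_def_of_pos hx, mul_comm]
  calc |exp (n * log x) - 1| ≤ |n * log x| * exp |n * log x| := abs_exp_sub_one_le_mul_exp _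
    _ ≤ |n| * T * exp (|n| * T) := by gcongr; exact le_trans (abs_nonneg _) hnT

lemma abs_one_sub_pow_le {x T : ℝ} (hx : 0 < x) (n : ℕ) (h : |log x| ≤ T) :
    |1 - x ^ n| ≤ n * T * exp (n * T) := by
  simpa using abs_one_sub_zpow_le hx n h

lemma DifferentiableAt.exists_abs_log_le {f : ℝ → ℝ} (hf : DifferentiableAt ℝ f 0)
    (h0 : f 0 = 1) : ∃ C, ∀ᶠ ε in 𝓝 0, |Real.log (f ε)| ≤ C * |ε| := by
  have hlog : DifferentiableAt ℝ (fun ε => Real.log (f ε)) 0 := hf.log (by simp [h0])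
  obtain ⟨C, hC⟩ := hlog.hasDerivAt.isBigO_sub.bound
  exact ⟨C, by simpa [h0] using hC⟩

lemma HasDerivAt.tendsto_one_sub_div {f : ℝ → ℝ} {d : ℝ} (hf : HasDerivAt f d 0)
    (h0 : f 0 = 1) : Tendsto (fun ε => (1 - f ε) / ε) (𝓝[≠] 0) (𝓝 (-d)) := by
  refine (hasDerivAt_iff_tendsto_slope_zero.mp hf).neg.congr fun ε => ?_
  simp only [zero_add, h0, smul_eq_mul]
  ring

lemma Filter.Tendsto.exp_sub_one_div {α : Type*} {F : Filter α} {S g : α → ℂ} {L : ℂ}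
    (hg : Tendsto g F (𝓝 0)) (hg0 : ∀ᶠ x in F, g x ≠ 0)
    (h : Tendsto (fun x => S x / g x) F (𝓝 L)) :
    Tendsto (fun x => (Complex.exp (S x) - 1) / g x) F (𝓝 L) := by
  have hS : Tendsto S F (𝓝 0) := by
    simpa using (h.mul hg).congr' (hg0.mono fun x hx => div_mul_cancel₀ (S x) hx)
  have hrem : Tendsto (fun x => (Complex.exp (S x) - 1 - S x) / g x) F (𝓝 0) := by
    refine squeeze_zero_norm' ?_ (by simpa using h.norm.mul hS.norm)
    filter_upwards [hS.eventually (Metric.closedBall_mem_nhds (0 : ℂ) one_pos)] with x hx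
    rw [dist_zero_right] at hx
    rw [norm_div, div_mul_eq_mul_div, ← sq]
    gcongr
    exact Complex.norm_exp_sub_one_sub_id_le hx
  simpa using (h.add hrem).congr fun x => by ring

lemma hasSum_succ_mul_pow_succ {𝕜 : Type*} [NormedDivisionRing 𝕜] {z : 𝕜} (hz : ‖z‖ < 1) :
    HasSum (fun l : ℕ => ((l + 1 : ℕ) : 𝕜) * z ^ (l + 1)) (z / (1 - z) ^ 2) := by
  have h := hasSum_coe_mul_geometric_of_norm_lt_one hz
  rw [← hasSum_nat_add_iff' 1] at h
  simpa using h

lemma Eterm_eq_ofReal_mul (k : ℕ) (p q : ℝ) (z : ℂ) (l : ℕ) :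
    Eterm k p q z l = (((1 - p ^ (-((k : ℤ) * l))) * (1 - (p ^ k * q ^ 2) ^ l)
      / (1 + q ^ (2 * l)) : ℝ) : ℂ) * (z ^ l / l) := by
  rw [Eterm]; push_cast; ring

lemma norm_Eterm_le {k l : ℕ} {p q T₁ T₂ : ℝ} (z : ℂ) (hp : 0 < p) (hq : q ≠ 0)
    (h₁ : |log p| ≤ T₁) (h₂ : |log (p ^ k * q ^ 2)| ≤ T₂) :
    ‖Eterm k p q z l‖ ≤ k * T₁ * T₂ * (l * (exp (k * T₁ + T₂) * ‖z‖) ^ l) := by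
  have hA : |1 - p ^ (-((k : ℤ) * l))| ≤ (k * l) * T₁ * exp ((k * l) * T₁) := by
    simpa using abs_one_sub_zpow_le hp (-((k : ℤ) * l)) h₁
  have hB := abs_one_sub_pow_le (by positivity) l h₂
  have hD : 1 ≤ |1 + q ^ (2 * l)| := by
    have : 0 ≤ q ^ (2 * l) := (even_two_mul l).pow_nonneg q
    rw [abs_of_nonneg (by positivity)]; linarith
  have hT₁ : 0 ≤ T₁ := (abs_nonneg _).trans h₁
  have hT₂ : 0 ≤ T₂ := (abs_nonneg _).trans h₂
  rw [Eterm_eq_ofReal_mul, norm_mul, Complex.norm_real, Real.norm_eq_abs, abs_div, abs_mul,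
    norm_div, norm_pow, Complex.norm_natCast]
  calc |1 - p ^ (-((k : ℤ) * l))| * |1 - (p ^ k * q ^ 2) ^ l| / |1 + q ^ (2 * l)|
        * (‖z‖ ^ l / l)
      ≤ (k * l) * T₁ * exp ((k * l) * T₁) * (l * T₂ * exp (l * T₂)) / 1 * (‖z‖ ^ l / l) := by
        gcongr
    _ = k * T₁ * T₂ * (l * (exp (k * T₁ + T₂) * ‖z‖) ^ l) := by
        rw [mul_pow, ← exp_nat_mul]
        field_simp
        rw [mul_add, exp_add]; ring_nf

section Deformation

variable {p q : ℝ → ℝ} {a b : ℝ}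

lemma exists_summable_bound_norm_Eterm (k : ℕ) {z : ℂ} (hp : DifferentiableAt ℝ p 0)
    (hq : DifferentiableAt ℝ q 0) (hp0 : p 0 = 1) (hq0 : q 0 = 1) (hz : ‖z‖ < 1) :
    ∃ bound : ℕ → ℝ, Summable bound ∧
      ∀ᶠ ε in 𝓝 0, ∀ l, ‖Eterm k (p ε) (q ε) z l‖ ≤ ε ^ 2 * bound l := by
  obtain ⟨C₁, hC₁⟩ := hp.exists_abs_log_le hp0
  obtain ⟨C₂, hC₂⟩ := DifferentiableAt.exists_abs_log_le (f := fun ε => p ε ^ k * q ε ^ 2)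
    ((hp.pow k).mul (hq.pow 2)) (by simp [hp0, hq0])
  set ρ := (1 + ‖z‖) / 2
  have hρ : ‖ρ‖ < 1 := by
    rw [Real.norm_of_nonneg (by positivity)]; simp only [ρ]; linarith
  have hpos : ∀ᶠ ε in 𝓝 0, 0 < p ε :=
    hp.continuousAt.eventually_const_lt (by rw [hp0]; exact one_pos)
  have hne : ∀ᶠ ε in 𝓝 0, q ε ≠ 0 := hq.continuousAt.eventually_ne (by simp [hq0])
  have hgrowth : ∀ᶠ ε in 𝓝 0, exp (k * (C₁ * |ε|) + C₂ * |ε|) * ‖z‖ < ρ :=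
    (Continuous.tendsto (by fun_prop) 0).eventually_lt_const
      (by simp only [ρ, abs_zero, mul_zero, add_zero, exp_zero, one_mul]; linarith)
  refine ⟨fun l => k * C₁ * C₂ * (l * ρ ^ l),
    ((summable_pow_mul_geometric_of_norm_lt_one 1 hρ).congr fun l => by simp).mul_left _, ?_⟩
  filter_upwards [hC₁, hC₂, hpos, hne, hgrowth] with ε h₁ h₂ hpε hqε hgε l
  calc ‖Eterm k (p ε) (q ε) z l‖
      ≤ k * (C₁ * |ε|) * (C₂ * |ε|) * (l * (exp (k * (C₁ * |ε|) + C₂ * |ε|) * ‖z‖) ^ l) :=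
        norm_Eterm_le z hpε hqε h₁ h₂
    _ ≤ k * (C₁ * |ε|) * (C₂ * |ε|) * (l * ρ ^ l) := by
        have : 0 ≤ k * (C₁ * |ε|) * (C₂ * |ε|) := by
          have := (abs_nonneg _).trans h₁
          have := (abs_nonneg _).trans h₂
          positivity
        gcongr
    _ = ε ^ 2 * (k * C₁ * C₂ * (l * ρ ^ l)) := by rw [← sq_abs ε]; ring

lemma eventually_summable_norm_Eterm (k : ℕ) {z : ℂ} (hp : DifferentiableAt ℝ p 0)
    (hq : DifferentiableAt ℝ q 0) (hp0 : p 0 = 1) (hq0 : q 0 = 1) (hz : ‖z‖ < 1) :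
    ∀ᶠ ε in 𝓝 0, Summable (fun l => ‖Eterm k (p ε) (q ε) z (l + 1)‖) := by
  obtain ⟨bound, hsum, hbound⟩ := exists_summable_bound_norm_Eterm k hp hq hp0 hq0 hz
  filter_upwards [hbound] with ε hε
  exact .of_nonneg_of_le (fun _ => norm_nonneg _) (fun l => hε (l + 1))
    (((summable_nat_add_iff 1).mpr hsum).mul_left (ε ^ 2))

lemma tendsto_Eterm_div_sq (k l : ℕ) (z : ℂ) (hp : HasDerivAt p a 0) (hq : HasDerivAt q b 0)
    (hp0 : p 0 = 1) (hq0 : q 0 = 1) :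
    Tendsto (fun ε : ℝ => Eterm k (p ε) (q ε) z l / (ε : ℂ) ^ 2) (𝓝[≠] 0)
      (𝓝 (-(k * a * (k * a + 2 * b)) / 2 * (l * z ^ l))) := by
  have hP : HasDerivAt (fun ε => p ε ^ (-((k : ℤ) * l))) ((-((k : ℤ) * l) : ℤ) * a) 0 := by
    have := (hasDerivAt_zpow (-((k : ℤ) * l)) (p 0) (by simp [hp0])).comp 0 hp
    rwa [hp0, one_zpow, mul_one] at this
  have hY : HasDerivAt (fun ε => (p ε ^ k * q ε ^ 2) ^ l) (l * (k * a + 2 * b)) 0 := by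
    simpa [hp0, hq0] using ((hp.fun_pow k).mul (hq.fun_pow 2)).fun_pow l
  have hD : Tendsto (fun ε => 1 + q ε ^ (2 * l)) (𝓝[≠] 0) (𝓝 2) := by
    have := ((hq.continuousAt.pow (2 * l)).const_add 1).tendsto.mono_left
      (nhdsWithin_le_nhds (s := {0}ᶜ))
    rwa [Pi.pow_apply, hq0, one_pow, one_add_one_eq_two] at this
  have hlim := ((((hP.tendsto_one_sub_div (by simp [hp0])).mul
    (hY.tendsto_one_sub_div (by simp [hp0, hq0]))).div hD two_ne_zero).ofReal).mul_const
    (z ^ l / l)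
  convert hlim using 1
  · funext ε
    simp only [Pi.div_apply]
    rw [Eterm_eq_ofReal_mul]
    push_cast
    ring
  · push_cast
    field_simp

theorem tendsto_Efun_sub_one_div_sq (k : ℕ) {z : ℂ} (hp : HasDerivAt p a 0)
    (hq : HasDerivAt q b 0) (hp0 : p 0 = 1) (hq0 : q 0 = 1) (hz : ‖z‖ < 1) :
    Tendsto (fun ε : ℝ => (Efun k (p ε) (q ε) z - 1) / (ε : ℂ) ^ 2) (𝓝[≠] 0)
      (𝓝 (-(k * a * (k * a + 2 * b)) / 2 * (z / (1 - z) ^ 2))) := by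
  obtain ⟨bound, hsum, hbound⟩ :=
    exists_summable_bound_norm_Eterm k hp.differentiableAt hq.differentiableAt hp0 hq0 hz
  have hseries := tendsto_tsum_of_dominated_convergence ((summable_nat_add_iff 1).mpr hsum)
    (fun l => tendsto_Eterm_div_sq k (l + 1) z hp hq hp0 hq0) ?_
  · rw [tsum_mul_left, (hasSum_succ_mul_pow_succ hz).tsum_eq] at hseries
    refine Tendsto.exp_sub_one_div ?_ ?_ (hseries.congr fun ε => tsum_div_const)
    · exact ((Complex.continuous_ofReal.pow 2).tendsto' 0 0 (by simp)).mono_left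
        nhdsWithin_le_nhds
    · filter_upwards [self_mem_nhdsWithin] with ε hε
      exact pow_ne_zero 2 (Complex.ofReal_ne_zero.mpr hε)
  · filter_upwards [nhdsWithin_le_nhds hbound, self_mem_nhdsWithin] with ε hε hε0 l
    rw [norm_div, norm_pow, Complex.norm_real, Real.norm_eq_abs,
      div_le_iff₀ (pow_pos (abs_pos.mpr hε0) 2), sq_abs]
    linarith [hε (l + 1)]

end Deformation

lemma hasDerivAt_one_add_mul (η : ℝ) : HasDerivAt (fun ε : ℝ => 1 + η * ε) η 0 := by
  simpa using ((hasDerivAt_id (0 : ℝ)).const_mul η).const_add 1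

lemma hasDerivAt_one_add_mul_one_add_mul_rpow (η s : ℝ) :
    HasDerivAt (fun ε : ℝ => (1 + ε) * (1 + η * ε) ^ s) (1 + s * η) 0 := by
  have := ((hasDerivAt_id (0 : ℝ)).const_add 1).mul
    ((hasDerivAt_one_add_mul η).rpow_const (p := s) (by simp))
  exact this.congr_deriv (by simp; ring)

theorem scaling_limit_gk_star_general (k : ℕ) (η c : ℝ) (z : ℂ)
    (hz : ‖z‖ < 1) :
    ∃ ε₀ : ℝ, 0 < ε₀ ∧
      (∀ ε : ℝ, 0 < ε → ε < ε₀ →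
        Summable (fun l : ℕ =>
          ‖Eterm k ((1 + ε) * (1 + η * ε) ^ (-(2 * c))) (1 + η * ε) z (l + 1)‖)) ∧
      Filter.Tendsto
        (fun ε : ℝ =>
          (Efun k ((1 + ε) * (1 + η * ε) ^ (-(2 * c))) (1 + η * ε) z - 1) / (ε : ℂ) ^ 2)
        (nhdsWithin 0 (Set.Ioi 0))
        (nhds (-(((k : ℂ) * (1 - 2 * (η : ℂ) * (c : ℂ))
            * ((k : ℂ) * (1 - 2 * (η : ℂ) * (c : ℂ)) + 2 * (η : ℂ))) / 2)
          * (z / (1 - z) ^ 2))) := by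
  have hp := hasDerivAt_one_add_mul_one_add_mul_rpow η (-(2 * c))
  have hq := hasDerivAt_one_add_mul η
  obtain ⟨ε₀, hε₀, hsum⟩ := Metric.eventually_nhds_iff.mp <|
    eventually_summable_norm_Eterm k hp.differentiableAt hq.differentiableAt (by simp) (by simp) hz
  refine ⟨ε₀, hε₀, fun ε hε hεε₀ => hsum (by rwa [Real.dist_0_eq_abs, abs_of_pos hε]), ?_⟩
  have hlim := (tendsto_Efun_sub_one_div_sq k hp hq (by simp) (by simp) hz).mono_left
    (nhdsWithin_mono 0 fun ε (hε : ε ∈ Set.Ioi 0) => hε.ne')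
  convert hlim using 2
  push_cast
  ring

/-- Scaling limit of `g^{*(k)}`: with `p = 1 + ε`, `q = 1 + ηε`, `p* = p q^{−2c}`,
the series converges absolutely for small `ε > 0` and
`lim_{ε→0⁺} (E_k(z;p*,q) − 1)/ε² = −(k(1−2ηc)(k(1−2ηc)+2η)/2) · z/(1−z)²`. -/
theorem scaling_limit_gk_star (k : ℕ) (hk : 1 ≤ k) (η c : ℝ) (z : ℂ)
    (hz : ‖z‖ < 1) :
    ∃ ε₀ : ℝ, 0 < ε₀ ∧
      (∀ ε : ℝ, 0 < ε → ε < ε₀ →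
        Summable (fun l : ℕ =>
          ‖Eterm k ((1 + ε) * (1 + η * ε) ^ (-(2 * c))) (1 + η * ε) z (l + 1)‖)) ∧
      Filter.Tendsto
        (fun ε : ℝ =>
          (Efun k ((1 + ε) * (1 + η * ε) ^ (-(2 * c))) (1 + η * ε) z - 1) / (ε : ℂ) ^ 2)
        (nhdsWithin 0 (Set.Ioi 0))
        (nhds (-(((k : ℂ) * (1 - 2 * (η : ℂ) * (c : ℂ))
            * ((k : ℂ) * (1 - 2 * (η : ℂ) * (c : ℂ)) + 2 * (η : ℂ))) / 2)
          * (z / (1 - z) ^ 2))) :=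
  scaling_limit_gk_star_general k η c z hz
end
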